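/- For all integers 1 ≤ p, q ≤ N, every eigenvector of J(p,q) is also an eigenvector of S(p,q): if v ∈ ℝ^q is nonzero and J(p,q) v = μ v for some μ ∈ ℝ, then there exists λ ∈ ℝ such that S(p,q) v = λ v. -/

import Mathlib

open Matrix Complex

/-- The periodic prolate matrix `S(p,q) ∈ ℝ^{q×q}` with entries
`sin(pπ(j-k)/N)/sin(π(j-k)/N)` off the diagonal and `p` on the diagonal. -/
noncomputable def prolateS (N p q : ℕ) : Matrix (Fin q) (Fin q) ℝ :=
  fun j k => if j = k then (p : ℝ)
    else Real.sin ((p : ℝ) * Real.pi * (((j : ℕ) : ℝ) - ((k : ℕ) : ℝ)) / N) /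
         Real.sin (Real.pi * (((j : ℕ) : ℝ) - ((k : ℕ) : ℝ)) / N)

/-- The symmetric tridiagonal matrix `J(p,q) ∈ ℝ^{q×q}` with diagonal entries
`cos(π(2k-q-1)/N)·cos(pπ/N)` for 1-based `k` (0-based: `cos(π(2k+1-q)/N)·cos(pπ/N)`),
off-diagonal entries `[J]_{k,k+1} = [J]_{k+1,k} = -sin(πk/N)·sin(π(q-k)/N)` for
1-based `1 ≤ k ≤ q-1`, and all other entries zero. -/
noncomputable def tridiagJ (N p q : ℕ) : Matrix (Fin q) (Fin q) ℝ :=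
  fun j k =>
    if j = k then
      Real.cos (Real.pi * (2 * ((j : ℕ) : ℝ) + 1 - (q : ℝ)) / N) *
        Real.cos ((p : ℝ) * Real.pi / N)
    else if (j : ℕ) + 1 = (k : ℕ) ∨ (k : ℕ) + 1 = (j : ℕ) then
      -(Real.sin (Real.pi * ((min (j : ℕ) (k : ℕ) : ℝ) + 1) / N) *
        Real.sin (Real.pi * ((q : ℝ) - ((min (j : ℕ) (k : ℕ) : ℝ) + 1)) / N))
    else 0

/-! `J(p,q)` and `S(p,q)` commute. Both are symmetric, so it suffices that `J S` is symmetric.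
Writing `S_{jk} = D(j - k)` with the Dirichlet kernel `D(t) = sin(pπt/N) / sin(πt/N)`, the
tridiagonal row formula expresses `(J S)_{jk}` as a three-term combination of `D(j - k - 1)`,
`D(j - k)`, `D(j - k + 1)`; its antisymmetric part is a multiple of
`sin(pπ(s-1)/N) - 2 cos(pπ/N) sin(pπs/N) + sin(pπ(s+1)/N) = 0`, where `s = j - k`.
Since `q ≤ N`, the superdiagonal of `J` has no zero entry, so an eigenvector of `J` vanishing at
index `0` vanishes; every eigenspace of `J` therefore has dimension at most one, and `S`
preserves it. -/

theorem Real.sin_mul_sin_sub_sub_sin_mul_sin_sub (a b c : ℝ) :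
    Real.sin a * Real.sin (c - a) - Real.sin b * Real.sin (c - b)
      = Real.sin (a - b) * Real.sin (c - a - b) := by
  simp only [Real.sin_sub, Real.cos_sub]
  linear_combination
    (Real.sin c * Real.sin b * Real.cos b - Real.cos c * Real.sin b ^ 2)
        * Real.sin_sq_add_cos_sq a
      + (Real.cos c * Real.sin a ^ 2 - Real.sin c * Real.sin a * Real.cos a)
        * Real.sin_sq_add_cos_sq b

theorem Real.sin_pi_mul_div_ne_zero {d N : ℝ} (hd : d ≠ 0) (hdN : |d| < N) :
    Real.sin (Real.pi * d / N) ≠ 0 := by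
  have hN : 0 < N := (abs_nonneg d).trans_lt hdN
  obtain ⟨hlo, hhi⟩ := abs_lt.mp hdN
  rw [Ne, Real.sin_eq_zero_iff_of_lt_of_lt]
  · exact div_ne_zero (mul_ne_zero Real.pi_ne_zero hd) hN.ne'
  · rw [lt_div_iff₀ hN]; nlinarith [Real.pi_pos]
  · rw [div_lt_iff₀ hN]; nlinarith [Real.pi_pos]

theorem Matrix.eq_zero_of_mulVec_eq_smul_of_apply_zero {K : Type*} [Ring K] [NoZeroDivisors K]
    {q : ℕ} {T : Matrix (Fin q) (Fin q) K}
    (h_upper : ∀ i j : Fin q, (i : ℕ) + 1 < j → T i j = 0)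
    (h_super : ∀ i j : Fin q, (i : ℕ) + 1 = j → T i j ≠ 0)
    {μ : K} {w : Fin q → K} (hw : T *ᵥ w = μ • w) (hq : 0 < q) (h0 : w ⟨0, hq⟩ = 0) :
    w = 0 := by
  suffices h : ∀ n, ∀ i : Fin q, (i : ℕ) ≤ n → w i = 0 from funext fun i => h i i le_rfl
  intro n
  induction n with
  | zero => exact fun i hi => (Fin.ext (Nat.le_zero.mp hi) : i = ⟨0, hq⟩) ▸ h0
  | succ n ih =>
    intro i hi
    by_cases hin : (i : ℕ) ≤ n
    · exact ih i hin
    let r : Fin q := ⟨n, by omega⟩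
    have hrow : T r i * w i = 0 := by
      have h := congrFun hw r
      rw [Pi.smul_apply, ih r le_rfl, smul_zero, mulVec, dotProduct,
        Finset.sum_eq_single i] at h
      · exact h
      · intro m _ hmi
        rcases le_or_gt (m : ℕ) n with hm | hm
        · rw [ih m hm, mul_zero]
        · rw [h_upper r m (by simp only [r]; omega), zero_mul]
      · simp
    exact (mul_eq_zero.mp hrow).resolve_left (h_super r i (by simp only [r]; omega))

theorem Matrix.exists_mulVec_eq_smul_of_commute {K n : Type*} [Field K] [Fintype n]
    {A B : Matrix n n K} (hAB : Commute A B) {μ : K} {v : n → K} (hv : B *ᵥ v = μ • v)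
    (i : n)
    (h_simple : ∀ w : n → K, B *ᵥ w = μ • w → w i = 0 → w = 0) :
    ∃ c : K, A *ᵥ v = c • v := by
  have hAv : B *ᵥ (A *ᵥ v) = μ • A *ᵥ v := by
    rw [mulVec_mulVec, ← hAB.eq, ← mulVec_mulVec, hv, mulVec_smul]
  by_cases hvi : v i = 0
  · exact ⟨0, by rw [h_simple v hv hvi, mulVec_zero, smul_zero]⟩
  refine ⟨(A *ᵥ v) i / v i, sub_eq_zero.mp (h_simple _ ?_ ?_)⟩
  · rw [mulVec_sub, mulVec_smul, hAv, hv, smul_sub, smul_comm]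
  · simp [hvi]

/-- `jacobiOffDiag (π / N) q (k + 1)` is the entry `J(p,q)_{k,k+1}`; it vanishes at `k + 1 = 0`
and at `k + 1 = q`, so the row formula `tridiagJ_mul_sum` needs no boundary cases. -/
noncomputable def jacobiOffDiag (θ Q x : ℝ) : ℝ :=
  -(Real.sin (x * θ) * Real.sin ((Q - x) * θ))

noncomputable def jacobiDiag (θ P Q x : ℝ) : ℝ :=
  Real.cos ((2 * x + 1 - Q) * θ) * Real.cos (P * θ)

theorem jacobi_row_symm {f : ℝ → ℝ} {θ P : ℝ} (hf_neg : ∀ t, f (-t) = f t)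
    (hf_sin : ∀ t, f t * Real.sin (t * θ) = Real.sin (P * (t * θ))) (Q x y : ℝ) :
    jacobiOffDiag θ Q x * f (x - 1 - y) + jacobiDiag θ P Q x * f (x - y)
        + jacobiOffDiag θ Q (x + 1) * f (x + 1 - y)
      = jacobiOffDiag θ Q y * f (y - 1 - x) + jacobiDiag θ P Q y * f (y - x)
        + jacobiOffDiag θ Q (y + 1) * f (y + 1 - x) := by
  rw [show y - 1 - x = -(x + 1 - y) by ring, show y - x = -(x - y) by ring,
    show y + 1 - x = -(x - 1 - y) by ring, hf_neg, hf_neg, hf_neg]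
  have h_off₁ : jacobiOffDiag θ Q x - jacobiOffDiag θ Q (y + 1)
      = -(Real.sin ((Q - x - y - 1) * θ) * Real.sin ((x - 1 - y) * θ)) := by
    unfold jacobiOffDiag
    linear_combination (norm := ring_nf)
      -Real.sin_mul_sin_sub_sub_sin_mul_sin_sub (x * θ) ((y + 1) * θ) (Q * θ)
  have h_off₂ : jacobiOffDiag θ Q (x + 1) - jacobiOffDiag θ Q y
      = -(Real.sin ((Q - x - y - 1) * θ) * Real.sin ((x + 1 - y) * θ)) := by
    unfold jacobiOffDiag
    linear_combination (norm := ring_nf)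
      -Real.sin_mul_sin_sub_sub_sin_mul_sin_sub ((x + 1) * θ) (y * θ) (Q * θ)
  have h_diag : jacobiDiag θ P Q x - jacobiDiag θ P Q y
      = 2 * Real.cos (P * θ) * Real.sin ((Q - x - y - 1) * θ) * Real.sin ((x - y) * θ) := by
    rw [jacobiDiag, jacobiDiag, ← sub_mul, Real.cos_sub_cos,
      show ((2 * x + 1 - Q) * θ + (2 * y + 1 - Q) * θ) / 2 = -((Q - x - y - 1) * θ) by ring,
      show ((2 * x + 1 - Q) * θ - (2 * y + 1 - Q) * θ) / 2 = (x - y) * θ by ring, Real.sin_neg]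
    ring
  have h_rec : Real.sin (P * ((x - 1 - y) * θ)) + Real.sin (P * ((x + 1 - y) * θ))
      = 2 * Real.cos (P * θ) * Real.sin (P * ((x - y) * θ)) := by
    rw [show P * ((x - 1 - y) * θ) = P * ((x - y) * θ) - P * θ by ring,
      show P * ((x + 1 - y) * θ) = P * ((x - y) * θ) + P * θ by ring,
      Real.sin_sub, Real.sin_add]
    ring
  linear_combination f (x - 1 - y) * h_off₁ + f (x - y) * h_diag + f (x + 1 - y) * h_off₂
    - Real.sin ((Q - x - y - 1) * θ) * (hf_sin (x - 1 - y) + hf_sin (x + 1 - y)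
      - 2 * Real.cos (P * θ) * hf_sin (x - y) + h_rec)

theorem Fin.sum_ite_natCast_eq {q : ℕ} {x c : ℝ}
    (hc : (∀ m : Fin q, (m : ℝ) ≠ x) → c = 0) :
    ∑ m : Fin q, (if (m : ℝ) = x then c else 0) = c := by
  by_cases hx : ∃ m : Fin q, (m : ℝ) = x
  · obtain ⟨m, rfl⟩ := hx
    rw [Finset.sum_eq_single m
      (fun b _ hb => if_neg fun h => hb (Fin.ext (by exact_mod_cast h))) (by simp), if_pos rfl]
  · simp only [not_exists] at hx
    simp [hx, hc hx]

theorem tridiagJ_apply_mul (N p q : ℕ) (j m : Fin q) (g : ℝ → ℝ) :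
    tridiagJ N p q j m * g m
      = (if (m : ℝ) = j - 1 then jacobiOffDiag (Real.pi / N) q j * g (j - 1) else 0)
        + (if (m : ℝ) = j then jacobiDiag (Real.pi / N) p q j * g j else 0)
        + (if (m : ℝ) = j + 1 then jacobiOffDiag (Real.pi / N) q (j + 1) * g (j + 1) else 0) := by
  have hθ : ∀ t : ℝ, Real.pi * t / N = t * (Real.pi / N) := fun t => by ring
  have hθp : (p : ℝ) * Real.pi / N = p * (Real.pi / N) := by ring
  rcases (by omega : (m : ℕ) + 1 = j ∨ (m : ℕ) = j ∨ (m : ℕ) = j + 1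
      ∨ ((m : ℕ) + 1 < j ∨ (j : ℕ) + 1 < m)) with h | h | h | h
  · have hr : ((m : ℕ) : ℝ) = (j : ℕ) - 1 := by rw [← h]; push_cast; ring
    rw [if_pos hr, if_neg (by linarith), if_neg (by linarith), tridiagJ,
      if_neg (Fin.ne_of_val_ne (by omega)), if_pos (Or.inr h), min_eq_right (by linarith), hr]
    simp only [jacobiOffDiag, hθ]
    ring_nf
  · have hr : ((m : ℕ) : ℝ) = (j : ℕ) := by rw [h]
    rw [if_pos hr, if_neg (by linarith), if_neg (by linarith), tridiagJ,
      if_pos (Fin.ext h.symm), hr]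
    simp only [jacobiDiag, hθ, hθp]
    ring
  · have hr : ((m : ℕ) : ℝ) = (j : ℕ) + 1 := by rw [h]; push_cast; ring
    rw [if_pos hr, if_neg (by linarith), if_neg (by linarith), tridiagJ,
      if_neg (Fin.ne_of_val_ne (by omega)), if_pos (Or.inl h.symm), min_eq_left (by linarith), hr]
    simp only [jacobiOffDiag, hθ]
    ring_nf
  · have hr₁ : ((m : ℕ) : ℝ) + 1 ≠ (j : ℕ) := mod_cast (by omega : (m : ℕ) + 1 ≠ j)
    have hr₂ : ((m : ℕ) : ℝ) ≠ (j : ℕ) := mod_cast (by omega : (m : ℕ) ≠ j)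
    have hr₃ : ((m : ℕ) : ℝ) ≠ (j : ℕ) + 1 := mod_cast (by omega : (m : ℕ) ≠ j + 1)
    rw [if_neg (fun h' => hr₁ (by linarith)), if_neg hr₂, if_neg hr₃, tridiagJ,
      if_neg (Fin.ne_of_val_ne (by omega)), if_neg (by omega)]
    ring

theorem tridiagJ_mul_sum (N p q : ℕ) (j : Fin q) (g : ℝ → ℝ) :
    ∑ m : Fin q, tridiagJ N p q j m * g m
      = jacobiOffDiag (Real.pi / N) q j * g (j - 1) + jacobiDiag (Real.pi / N) p q j * g j
        + jacobiOffDiag (Real.pi / N) q (j + 1) * g (j + 1) := by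
  rw [Finset.sum_congr rfl fun m _ => tridiagJ_apply_mul N p q j m g, Finset.sum_add_distrib,
    Finset.sum_add_distrib, Fin.sum_ite_natCast_eq, Fin.sum_ite_natCast_eq,
    Fin.sum_ite_natCast_eq]
  · intro h
    have hjq : (q : ℝ) = (j : ℕ) + 1 := by
      by_contra hne
      exact h ⟨j + 1, by norm_cast at hne; omega⟩ (by push_cast; ring)
    simp [jacobiOffDiag, hjq]
  · exact fun h => absurd rfl (h j)
  · intro h
    have hj0 : (j : ℕ) = 0 := by
      by_contra hne
      exact h ⟨j - 1, by omega⟩ (by rw [Nat.cast_sub (by omega)]; simp)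
    simp [jacobiOffDiag, hj0]

/-- `sin (p t) / sin t = U_{p-1} (cos t)`, extended continuously to `t = 0`, where it equals `p`. -/
noncomputable def prolateKernel (N p : ℕ) (x : ℝ) : ℝ :=
  (Polynomial.Chebyshev.U ℝ ((p : ℤ) - 1)).eval (Real.cos (x * (Real.pi / N)))

theorem prolateKernel_neg (N p : ℕ) (x : ℝ) : prolateKernel N p (-x) = prolateKernel N p x := by
  rw [prolateKernel, prolateKernel, neg_mul, Real.cos_neg]

theorem prolateKernel_mul_sin (N p : ℕ) (x : ℝ) :
    prolateKernel N p x * Real.sin (x * (Real.pi / N)) = Real.sin (p * (x * (Real.pi / N))) := by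
  rw [prolateKernel, Polynomial.Chebyshev.U_real_cos]
  push_cast
  ring_nf

theorem prolateS_eq_prolateKernel {N p q : ℕ} (hqN : q ≤ N) (j k : Fin q) :
    prolateS N p q j k = prolateKernel N p (j - k) := by
  rw [prolateS]
  split_ifs with h
  · simp [h, prolateKernel, Polynomial.Chebyshev.U_eval_one]
  · have hjk : ((j : ℕ) : ℝ) - (k : ℕ) ≠ 0 :=
      sub_ne_zero.mpr (by exact_mod_cast Fin.val_ne_of_ne h)
    have hjkN : |((j : ℕ) : ℝ) - (k : ℕ)| < N := by
      rw [abs_sub_lt_iff]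
      constructor <;> linarith [(by exact_mod_cast j.isLt.trans_le hqN : ((j : ℕ) : ℝ) < N),
        (by exact_mod_cast k.isLt.trans_le hqN : ((k : ℕ) : ℝ) < N)]
    rw [div_eq_iff (Real.sin_pi_mul_div_ne_zero hjk hjkN),
      show Real.pi * (((j : ℕ) : ℝ) - (k : ℕ)) / N
        = (((j : ℕ) : ℝ) - (k : ℕ)) * (Real.pi / N) by ring,
      prolateKernel_mul_sin]
    congr 1
    ring

theorem isHermitian_prolateS (N p q : ℕ) : (prolateS N p q).IsHermitian := by
  rw [isHermitian_iff_isSymm]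
  refine IsSymm.ext fun j k => ?_
  unfold prolateS
  split_ifs with h h' h'
  · rfl
  · exact absurd h.symm h'
  · exact absurd h'.symm h
  · rw [← neg_sub, mul_neg, mul_neg, neg_div, neg_div, Real.sin_neg, Real.sin_neg,
      neg_div_neg_eq]

theorem isHermitian_tridiagJ (N p q : ℕ) : (tridiagJ N p q).IsHermitian := by
  rw [isHermitian_iff_isSymm]
  refine IsSymm.ext fun j k => ?_
  simp only [tridiagJ, eq_comm (a := k), or_comm (a := (k : ℕ) + 1 = j),
    min_comm ((k : ℕ) : ℝ)]
  split_ifs with h <;> simp [h]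

theorem commute_tridiagJ_prolateS {N p q : ℕ} (hqN : q ≤ N) :
    Commute (tridiagJ N p q) (prolateS N p q) := by
  rw [(isHermitian_tridiagJ N p q).commute_iff (isHermitian_prolateS N p q),
    isHermitian_iff_isSymm]
  refine IsSymm.ext fun j k => ?_
  simp only [mul_apply, prolateS_eq_prolateKernel hqN]
  rw [tridiagJ_mul_sum N p q k fun t => prolateKernel N p (t - j),
    tridiagJ_mul_sum N p q j fun t => prolateKernel N p (t - k)]
  exact jacobi_row_symm (prolateKernel_neg N p) (prolateKernel_mul_sin N p) q k j

theorem tridiagJ_apply_eq_zero_of_succ_lt {N p q : ℕ} {i j : Fin q} (h : (i : ℕ) + 1 < j) :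
    tridiagJ N p q i j = 0 := by
  rw [tridiagJ, if_neg (Fin.ne_of_val_ne (by omega)), if_neg (by omega)]

theorem tridiagJ_apply_ne_zero_of_succ_eq {N p q : ℕ} (hqN : q ≤ N) {i j : Fin q}
    (h : (i : ℕ) + 1 = j) : tridiagJ N p q i j ≠ 0 := by
  have hj : ((j : ℕ) : ℝ) < N := by exact_mod_cast j.isLt.trans_le hqN
  have hi : ((i : ℕ) : ℝ) + 1 = (j : ℕ) := by exact_mod_cast h
  rw [tridiagJ, if_neg (Fin.ne_of_val_ne (by omega)), if_pos (Or.inl h),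
    min_eq_left (by linarith), neg_ne_zero, hi]
  have hj0 : (0 : ℝ) < (j : ℕ) := by exact_mod_cast (by omega : 0 < (j : ℕ))
  have hjq : ((j : ℕ) : ℝ) < q := by exact_mod_cast j.isLt
  have hqN' : (q : ℝ) ≤ N := by exact_mod_cast hqN
  refine mul_ne_zero (Real.sin_pi_mul_div_ne_zero ?_ ?_) (Real.sin_pi_mul_div_ne_zero ?_ ?_)
  all_goals first | (apply ne_of_gt; linarith) | (rw [abs_lt]; constructor <;> linarith)

theorem eigenvector_tridiagJ_is_eigenvector_prolateS_general
    (N p q : ℕ) (hqN : q ≤ N)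
    (v : Fin q → ℝ) (μ : ℝ)
    (hJv : (tridiagJ N p q).mulVec v = μ • v) :
    ∃ lam : ℝ, (prolateS N p q).mulVec v = lam • v := by
  rcases q.eq_zero_or_pos with rfl | hq
  · exact ⟨0, Subsingleton.elim _ _⟩
  exact Matrix.exists_mulVec_eq_smul_of_commute (commute_tridiagJ_prolateS hqN).symm hJv
    ⟨0, hq⟩
    fun w hw => Matrix.eq_zero_of_mulVec_eq_smul_of_apply_zero
      (fun _ _ => tridiagJ_apply_eq_zero_of_succ_lt)
      (fun _ _ => tridiagJ_apply_ne_zero_of_succ_eq hqN) hw hq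

/-- Every eigenvector of `J(p,q)` is also an eigenvector of `S(p,q)`. -/
theorem eigenvector_tridiagJ_is_eigenvector_prolateS
    (N p q : ℕ) (hN : 0 < N) (hp1 : 1 ≤ p) (hpN : p ≤ N) (hq1 : 1 ≤ q) (hqN : q ≤ N)
    (v : Fin q → ℝ) (hv : v ≠ 0) (μ : ℝ)
    (hJv : (tridiagJ N p q).mulVec v = μ • v) :
    ∃ lam : ℝ, (prolateS N p q).mulVec v = lam • v :=
  eigenvector_tridiagJ_is_eigenvector_prolateS_general N p q hqN v μ hJv
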